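/- For positive integers m_1, ..., m_n with n ≥ 2 and at least one m_i > 1, the lambda-number (minimum span of an L(2,1)-labelling) of the complete n-partite graph K_{m_1,...,m_n} equals (m_1 + m_2 + ... + m_n) + n - 2. -/

import Mathlib

/-- An L(2,1)-labelling: adjacent vertices get labels differing by at least 2,
vertices at distance exactly two get different labels. -/
def IsL21Labelling {V : Type*} (G : SimpleGraph V) (f : V → ℕ) : Prop :=
  (∀ u v, G.Adj u v → 2 ≤ |(f u : ℤ) - (f v : ℤ)|) ∧
  ∀ u v, G.dist u v = 2 → f u ≠ f v

/-- The lambda-number: the least `k` such that `G` has an L(2,1)-labelling with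
labels in `{0, ..., k}` (equivalently, the minimum span). -/
noncomputable def lambdaNumber {V : Type*} (G : SimpleGraph V) : ℕ :=
  sInf {k | ∃ f : V → ℕ, IsL21Labelling G f ∧ ∀ v, f v ≤ k}

/-- The nonzero zero-divisors of `R`. -/
def zdVertices (R : Type*) [CommRing R] : Set R :=
  {x | x ≠ 0 ∧ ∃ y : R, y ≠ 0 ∧ x * y = 0}

/-- The zero-divisor graph of `R`: vertices are nonzero zero-divisors,
distinct `x, y` adjacent iff `x * y = 0`. -/
def zdGraph (R : Type*) [CommRing R] : SimpleGraph (zdVertices R) where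
  Adj x y := x ≠ y ∧ (x : R) * (y : R) = 0
  symm := by
    constructor
    rintro x y ⟨h1, h2⟩
    exact ⟨h1.symm, by rwa [mul_comm] at h2⟩
  loopless := by constructor; rintro x ⟨h, _⟩; exact h rfl

/-- Beck's zero-divisor graph of `R`: vertices are all of `R`,
distinct `x, y` adjacent iff `x * y = 0`. -/
def beckGraph (R : Type*) [CommRing R] : SimpleGraph R where
  Adj x y := x ≠ y ∧ x * y = 0
  symm := by
    constructor
    rintro x y ⟨h1, h2⟩
    exact ⟨h1.symm, by rwa [mul_comm] at h2⟩
  loopless := by constructor; rintro x ⟨h, _⟩; exact h rfl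

/-!
An L(2,1)-labelling of a complete multipartite graph with at least two nonempty parts is injective:
two vertices of one part are at distance two, two vertices of different parts are adjacent.
Moreover, if `a` is the largest label in some part, then `a + 1` is not a label: not in the same
part by maximality, and not in another part, whose vertices are adjacent to the one labelled `a`.
These `n` unused values are distinct, so `{0, …, k + 1}` holds at least `∑ mᵢ + n` values,
i.e. `k ≥ ∑ mᵢ + n - 2`. Listing the parts one after another, leaving one unused label
between consecutive parts, attains this bound.
-/

open Finset Function SimpleGraph

theorem SimpleGraph.dist_eq_two_of_adj_of_adj {V : Type*} {G : SimpleGraph V} {u v w : V}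
    (huv : u ≠ v) (hnadj : ¬ G.Adj u v) (huw : G.Adj u w) (hwv : G.Adj w v) : G.dist u v = 2 := by
  rw [SimpleGraph.dist, edist_eq_two_iff.mpr ⟨huv, hnadj, w, huw, hwv.symm⟩]
  rfl

lemma lambdaNumber_eq_of {V : Type*} {G : SimpleGraph V} {k : ℕ}
    (hex : ∃ f, IsL21Labelling G f ∧ ∀ v, f v ≤ k)
    (hmin : ∀ f j, IsL21Labelling G f → (∀ v, f v ≤ j) → k ≤ j) : lambdaNumber G = k :=
  le_antisymm (Nat.sInf_le hex) <| le_csInf ⟨k, hex⟩ fun _ ⟨f, hf, hfj⟩ => hmin f _ hf hfj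

lemma two_le_abs_natCast_sub_iff {a b : ℕ} : 2 ≤ |(a : ℤ) - b| ↔ a + 2 ≤ b ∨ b + 2 ≤ a := by
  rw [le_abs]
  omega

namespace IsL21Labelling

variable {V : Type*} {G : SimpleGraph V} {f : V → ℕ}

lemma add_two_le_or_add_two_le (hf : IsL21Labelling G f) {u v : V} (h : G.Adj u v) :
    f u + 2 ≤ f v ∨ f v + 2 ≤ f u :=
  two_le_abs_natCast_sub_iff.mp (hf.1 u v h)

lemma of_injective (hinj : Injective f)
    (hadj : ∀ u v, G.Adj u v → f u + 2 ≤ f v ∨ f v + 2 ≤ f u) : IsL21Labelling G f :=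
  ⟨fun u v h => two_le_abs_natCast_sub_iff.mpr (hadj u v h), fun _ _ _ => hinj.ne (by grind)⟩

end IsL21Labelling

section CompleteMultipartite

variable {ι : Type*} {V : ι → Type*}

lemma completeMultipartiteGraph_dist_eq_two {i j : ι} (hji : j ≠ i) (c : V j) {a b : V i}
    (hab : a ≠ b) : (completeMultipartiteGraph V).dist ⟨i, a⟩ ⟨i, b⟩ = 2 :=
  dist_eq_two_of_adj_of_adj (by simpa using hab) (by simp) (w := ⟨j, c⟩) hji.symm hji

lemma IsL21Labelling.injective_of_completeMultipartite [Nontrivial ι] [∀ i, Nonempty (V i)]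
    {f : (Σ i, V i) → ℕ} (hf : IsL21Labelling (completeMultipartiteGraph V) f) : Injective f := by
  rintro ⟨i, a⟩ ⟨j, b⟩ hab
  by_cases hij : i = j
  · subst hij
    by_contra hne
    obtain ⟨j, hji⟩ := exists_ne i
    have hab' : a ≠ b := fun h => hne (h ▸ rfl)
    exact hf.2 _ _ (completeMultipartiteGraph_dist_eq_two hji (Classical.arbitrary _) hab') hab
  · have := hf.add_two_le_or_add_two_le (u := ⟨i, a⟩) (v := ⟨j, b⟩) hij
    omega

lemma IsL21Labelling.card_add_card_le_of_completeMultipartite [Fintype ι] [Nontrivial ι]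
    [∀ i, Fintype (V i)] [∀ i, Nonempty (V i)] {f : (Σ i, V i) → ℕ} {k : ℕ}
    (hf : IsL21Labelling (completeMultipartiteGraph V) f) (hk : ∀ v, f v ≤ k) :
    Fintype.card (Σ i, V i) + Fintype.card ι ≤ k + 2 := by
  have hinj := hf.injective_of_completeMultipartite
  choose top htop using fun i => Finite.exists_max fun a : V i => f ⟨i, a⟩
  have hgap : ∀ v i, f v ≠ f ⟨i, top i⟩ + 1 := by
    rintro ⟨j, b⟩ i h
    by_cases hji : j = i
    · subst hji
      have := htop j b
      omega
    · have := hf.add_two_le_or_add_two_le (u := ⟨j, b⟩) (v := ⟨i, top i⟩) hji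
      omega
  let label (v : Σ i, V i) : Fin (k + 2) := ⟨f v, by have := hk v; omega⟩
  let aboveTop (i : ι) : Fin (k + 2) := ⟨f ⟨i, top i⟩ + 1, by have := hk ⟨i, top i⟩; omega⟩
  have hembed : Injective (Sum.elim label aboveTop) := by
    refine Injective.sumElim ?_ ?_ ?_
    · exact fun u v h => hinj (congrArg Fin.val h)
    · intro i j h
      exact congrArg Sigma.fst (hinj (Nat.succ_injective (congrArg Fin.val h)))
    · exact fun v i h => hgap v i (congrArg Fin.val h)
  simpa using Fintype.card_le_of_injective _ hembed

end CompleteMultipartite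

section FinParts

variable {n : ℕ} (m : Fin n → ℕ)

def consecutiveLabelling (v : Σ i, Fin (m i)) : ℕ :=
  ∑ j ∈ Iio v.1, m j + v.1 + v.2

lemma consecutiveLabelling_add_two_le {u v : Σ i, Fin (m i)} (h : u.1 < v.1) :
    consecutiveLabelling m u + 2 ≤ consecutiveLabelling m v := by
  have hsum : m u.1 + ∑ j ∈ Iio u.1, m j ≤ ∑ j ∈ Iio v.1, m j := by
    rw [← sum_insert (by simp)]
    exact sum_le_sum_of_subset fun x => by simp only [mem_insert, mem_Iio]; grind
  have := u.2.isLt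
  have : (u.1 : ℕ) < v.1 := h
  unfold consecutiveLabelling
  omega

lemma consecutiveLabelling_le (v : Σ i, Fin (m i)) :
    consecutiveLabelling m v ≤ ∑ i, m i + n - 2 := by
  have hsum : m v.1 + ∑ j ∈ Iio v.1, m j ≤ ∑ i, m i := by
    rw [← sum_insert (by simp)]
    exact sum_le_sum_of_subset (subset_univ _)
  have := v.2.isLt
  have := v.1.isLt
  unfold consecutiveLabelling
  omega

lemma isL21Labelling_consecutiveLabelling :
    IsL21Labelling (completeMultipartiteGraph fun i => Fin (m i)) (consecutiveLabelling m) := by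
  refine .of_injective ?_ fun u v (huv : u.1 ≠ v.1) => ?_
  · rintro ⟨i, a⟩ ⟨j, b⟩ h
    rcases lt_trichotomy i j with hij | rfl | hij
    · have := consecutiveLabelling_add_two_le m (u := ⟨i, a⟩) (v := ⟨j, b⟩) hij
      omega
    · have : (a : ℕ) = b := by simpa [consecutiveLabelling] using h
      simp [Fin.ext_iff, this]
    · have := consecutiveLabelling_add_two_le m (u := ⟨j, b⟩) (v := ⟨i, a⟩) hij
      omega
  · rcases huv.lt_or_gt with h | h
    · exact .inl (consecutiveLabelling_add_two_le m h)
    · exact .inr (consecutiveLabelling_add_two_le m h)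

end FinParts

theorem lambda_completeMultipartite_general (n : ℕ) (hn : 2 ≤ n) (m : Fin n → ℕ)
    (hpos : ∀ i, 0 < m i) :
    lambdaNumber (SimpleGraph.completeMultipartiteGraph (fun i => Fin (m i))) =
      (∑ i, m i) + n - 2 := by
  have : Nontrivial (Fin n) := Fin.nontrivial_iff_two_le.mpr hn
  have : ∀ i, Nonempty (Fin (m i)) := fun i => ⟨⟨0, hpos i⟩⟩
  refine lambdaNumber_eq_of
    ⟨_, isL21Labelling_consecutiveLabelling m, consecutiveLabelling_le m⟩ fun f k hf hk => ?_
  have := hf.card_add_card_le_of_completeMultipartite hk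
  simp only [Fintype.card_sigma, Fintype.card_fin] at this
  omega

/-- the lambda-number of the complete n-partite graph. -/
theorem lambda_completeMultipartite (n : ℕ) (hn : 2 ≤ n) (m : Fin n → ℕ)
    (hpos : ∀ i, 0 < m i) (hbig : ∃ i, 1 < m i) :
    lambdaNumber (SimpleGraph.completeMultipartiteGraph (fun i => Fin (m i))) =
      (∑ i, m i) + n - 2 :=
  lambda_completeMultipartite_general n hn m hpos
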